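/- arXiv:1706.07373 — 9 statements merged into one kernel-verified Lean document; each statement's English description precedes it below -/
import Mathlib

section
/- Let V be a finite-dimensional vector space over ℚ and f : V → ℚ a quadratic form, with f_ℝ : V ⊗ ℝ → ℝ its scalar extension to ℝ. Then f is positive definite if and only if f_ℝ is positive definite. -/
/-!
A positive definite form over `ℚ` has an orthogonal basis on which it takes positive values;
tensoring up gives an orthogonal basis of the real form with the same positive values, so the
real form is a positive weighted sum of squares. Conversely `f x = f_ℝ (1 ⊗ x)`, and `1 ⊗ x ≠ 0`
for `x ≠ 0` because `ℝ` is faithfully flat over the field `ℚ`.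
-/

open Module QuadraticMap

namespace QuadraticMap

variable {L : Type*} [Field L] [LinearOrder L] [IsStrictOrderedRing L]

theorem posDef_weightedSumSquares {ι : Type*} [Fintype ι] {w : ι → L} (hw : ∀ i, 0 < w i) :
    (weightedSumSquares L w).PosDef := by
  intro x hx
  obtain ⟨i, hi⟩ : ∃ i, x i ≠ 0 := Function.ne_iff.mp hx
  rw [weightedSumSquares_apply]
  exact Finset.sum_pos' (fun j _ => smul_nonneg (hw j).le (mul_self_nonneg _))
    ⟨i, Finset.mem_univ _, smul_pos (hw i) (mul_self_pos.mpr hi)⟩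

theorem PosDef.of_basisRepr {R M N ι : Type*} [CommSemiring R] [AddCommMonoid M] [Module R M]
    [PartialOrder N] [AddCommMonoid N] [Module R N] [Fintype ι] {Q : QuadraticMap R M N}
    {b : Basis ι R M} (h : (Q.basisRepr b).PosDef) : Q.PosDef := by
  intro x hx
  simpa [basisRepr_apply, b.sum_repr] using h (b.repr x) (by simpa using hx)

variable {M : Type*} [AddCommGroup M] [Module L M]

theorem posDef_of_iIsOrtho {ι : Type*} [Fintype ι] {Q : QuadraticForm L M} {b : Basis ι L M}
    (hb : (associated (R := L) Q).IsOrthoᵢ b) (hpos : ∀ i, 0 < Q (b i)) : Q.PosDef :=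
  PosDef.of_basisRepr <| (basisRepr_eq_of_iIsOrtho Q b hb).symm ▸ posDef_weightedSumSquares hpos

end QuadraticMap

namespace QuadraticForm

theorem iIsOrtho_baseChange {R A M ι : Type*} [CommRing R] [Invertible (2 : R)] [CommRing A]
    [Algebra R A] [Invertible (2 : A)] [AddCommGroup M] [Module R M]
    {f : QuadraticForm R M} {v : Basis ι R M} (hv : (associated (R := R) f).IsOrthoᵢ v) :
    (associated (R := A) (f.baseChange A)).IsOrthoᵢ (v.baseChange A) := by
  intro i j hij
  rw [Function.onFun, associated_baseChange, Basis.baseChange_apply, Basis.baseChange_apply,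
    LinearMap.BilinForm.baseChange_tmul, hv hij, zero_smul]

variable {K L V : Type*} [Field K] [LinearOrder K] [IsStrictOrderedRing K]
  [Field L] [LinearOrder L] [IsStrictOrderedRing L] [Algebra K L] [SMulPosStrictMono K L]
  [AddCommGroup V] [Module K V]

theorem PosDef.baseChange [FiniteDimensional K V] {f : QuadraticForm K V} (hf : f.PosDef) :
    (f.baseChange L).PosDef := by
  obtain ⟨v, hv⟩ := LinearMap.BilinForm.exists_orthogonal_basis (associated_isSymm K f)
  refine posDef_of_iIsOrtho (iIsOrtho_baseChange hv) fun i => ?_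
  rw [Basis.baseChange_apply, baseChange_tmul, one_mul, ← Algebra.algebraMap_eq_smul_one]
  exact algebraMap_pos L (hf _ (v.ne_zero i))

theorem PosDef.of_baseChange {f : QuadraticForm K V} (hf : (f.baseChange L).PosDef) :
    f.PosDef := by
  intro x hx
  have h := hf (1 ⊗ₜ x) (by rwa [Ne, FaithfullyFlat.one_tmul_eq_zero_iff])
  rw [baseChange_tmul, one_mul, ← Algebra.algebraMap_eq_smul_one,
    ← map_zero (algebraMap K L)] at h
  exact (algebraMap_strictMono L).lt_iff_lt.mp h

theorem posDef_baseChange_iff [FiniteDimensional K V] {f : QuadraticForm K V} :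
    (f.baseChange L).PosDef ↔ f.PosDef :=
  ⟨PosDef.of_baseChange, PosDef.baseChange⟩

end QuadraticForm

/-- A quadratic form over ℚ on a finite-dimensional vector space is positive
definite iff its base change to ℝ is positive definite. -/
theorem stmt0 (V : Type*) [AddCommGroup V] [Module ℚ V] [FiniteDimensional ℚ V]
    (f : QuadraticForm ℚ V) :
    f.PosDef ↔ (f.baseChange ℝ).PosDef :=
  QuadraticForm.posDef_baseChange_iff.symm
end

section
/- Let E be a finite-dimensional commutative ℚ-algebra and ρ an algebra automorphism of E such that Tr_{E/ℚ}(x·ρ(x)) > 0 for every nonzero x ∈ E. Then ρ is an involution, i.e., ρ(ρ(x)) = x for all x ∈ E. -/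
/-!
Extending scalars to `ℝ` keeps `x ↦ Tr(x ρ(x))` positive definite: over `ℚ` the symmetrised form
has an orthogonal basis with positive weights, and that basis stays orthogonal over `ℝ`.
Positivity rules out nonzero `x` with `x ρ(x)` nilpotent, since nilpotents have trace zero.
So `ℝ ⊗ E` is reduced, and `ρ` fixes each of its finitely many maximal ideals `p`: otherwise an
element vanishing at every maximal ideal but `p` would be such an `x`. Each `(ℝ ⊗ E)/p` is `ℝ`
or `ℂ`, whose elements all satisfy real quadratic equations, so `ρ` induces an involution on it;
as `ℝ ⊗ E` embeds in the product of these fields, `ρ` is an involution.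
-/

open Polynomial
open scoped TensorProduct

namespace LinearMap.BilinForm

variable {R A M : Type*} [CommRing R] [CommRing A] [Algebra R A] [AddCommGroup M] [Module R M]

theorem baseChange_add (B B' : LinearMap.BilinForm R M) :
    (B + B').baseChange A = B.baseChange A + B'.baseChange A := by
  ext; simp [add_smul]

theorem baseChange_flip (B : LinearMap.BilinForm R M) :
    B.flip.baseChange A = (B.baseChange A).flip := by
  ext; simp

variable {L V : Type*} [Field L] [LinearOrder L] [IsStrictOrderedRing L]
  [AddCommGroup V] [Module ℚ V] [FiniteDimensional ℚ V]

theorem baseChange_apply_self_pos_of_isSymm {B : LinearMap.BilinForm ℚ V} (hB : B.IsSymm)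
    (hpos : ∀ x, x ≠ 0 → 0 < B x x) {X : L ⊗[ℚ] V} (hX : X ≠ 0) :
    0 < B.baseChange L X X := by
  obtain ⟨v, hv⟩ := exists_orthogonal_basis (isSymm_iff.mp hB)
  set c := (v.baseChange L).repr X
  have hdiag : B.baseChange L X X = ∑ i, c i ^ 2 * (B (v i) (v i) : L) := by
    conv_lhs => rw [← (v.baseChange L).sum_repr X]
    simp only [map_sum, map_smul, LinearMap.sum_apply, LinearMap.smul_apply,
      Module.Basis.baseChange_apply, baseChange_tmul, mul_one, smul_eq_mul, Rat.smul_def]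
    refine Finset.sum_congr rfl fun i _ => ?_
    rw [Finset.sum_eq_single i (fun j _ hji => by simp [hv hji]) (by simp)]
    ring
  have hweight : ∀ i, (0 : L) < B (v i) (v i) := fun i => by
    exact_mod_cast hpos (v i) (v.ne_zero i)
  obtain ⟨i, hi⟩ : ∃ i, c i ≠ 0 := by
    by_contra! h
    exact hX ((v.baseChange L).repr.map_eq_zero_iff.mp (Finsupp.ext h))
  rw [hdiag]
  refine Finset.sum_pos' (fun j _ => ?_) ⟨i, Finset.mem_univ i, ?_⟩
  · have := hweight j
    positivity
  · have := hweight i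
    positivity

theorem baseChange_apply_self_pos {B : LinearMap.BilinForm ℚ V}
    (hpos : ∀ x, x ≠ 0 → 0 < B x x) {X : L ⊗[ℚ] V} (hX : X ≠ 0) :
    0 < B.baseChange L X X := by
  have hsymm : (B + B.flip).IsSymm := ⟨fun x y => by simp [add_comm]⟩
  have := baseChange_apply_self_pos_of_isSymm hsymm
    (fun x hx => by simpa using add_pos (hpos x hx) (hpos x hx)) hX
  simpa [baseChange_add, baseChange_flip] using this

end LinearMap.BilinForm

section BaseChange

variable {R A E : Type*} [CommRing R] [CommRing A] [Algebra R A]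
  [CommRing E] [Algebra R E] [Module.Free R E] [Module.Finite R E]

theorem Algebra.trace_one_tmul (z : E) :
    Algebra.trace A (A ⊗[R] E) (1 ⊗ₜ z) = algebraMap R A (Algebra.trace R E z) := by
  rw [Algebra.trace_apply, Algebra.trace_apply, ← Algebra.baseChange_lmul,
    LinearMap.trace_baseChange]

theorem Algebra.baseChange_traceForm_compl₂ (ρ : E ≃ₐ[R] E) :
    LinearMap.BilinForm.baseChange A ((Algebra.traceForm R E).compl₂ ρ.toLinearMap) =
      (Algebra.traceForm A (A ⊗[R] E)).compl₂
        (Algebra.TensorProduct.congr AlgEquiv.refl ρ).toLinearMap := by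
  ext x y
  simp [Algebra.trace_one_tmul, Algebra.algebraMap_eq_smul_one]

end BaseChange

theorem eq_zero_of_isNilpotent_mul_apply_of_trace_pos {K E : Type*} [Field K] [Preorder K]
    [CommRing E] [Algebra K E] [FiniteDimensional K E] {ρ : E ≃ₐ[K] E}
    (hpos : ∀ x : E, x ≠ 0 → 0 < Algebra.trace K E (x * ρ x)) {x : E}
    (hx : IsNilpotent (x * ρ x)) : x = 0 := by
  by_contra hx0
  have htr : Algebra.trace K E (x * ρ x) = 0 :=
    (LinearMap.isNilpotent_trace_of_isNilpotent (hx.map (Algebra.lmul K E))).eq_zero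
  exact (hpos x hx0).ne' htr

namespace IsArtinianRing

variable {A : Type*} [CommRing A] [IsArtinianRing A]

theorem isNilpotent_of_forall_isMaximal_mem {x : A} (h : ∀ m : Ideal A, m.IsMaximal → x ∈ m) :
    IsNilpotent x := by
  have hx : x ∈ Ideal.jacobson ⊥ := Ideal.mem_sInf.mpr fun m hm => h m hm.2
  rwa [Ideal.jacobson_bot, Ring.jacobson_eq_nilradical_of_krullDimLE_zero, mem_nilradical] at hx

theorem exists_ne_zero_forall_isMaximal_ne_mem {p : Ideal A} (hp : p.IsMaximal) :
    ∃ e : A, e ≠ 0 ∧ ∀ m : Ideal A, m.IsMaximal → m ≠ p → e ∈ m := by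
  have hfin := setOfPred_isMaximal_finite A
  set s := hfin.toFinset.erase p
  have hs : ∀ m, m ∈ s ↔ m.IsMaximal ∧ m ≠ p := fun m => by simp [s, and_comm]
  have hne : s.inf id ≠ ⊥ := by
    intro h0
    obtain ⟨m, hms, hmp⟩ := (hp.isPrime.inf_le' (s := s) (f := id)).mp (h0 ▸ bot_le)
    exact ((hs m).mp hms).2 (((hs m).mp hms).1.eq_of_le hp.ne_top hmp)
  obtain ⟨e, he, he0⟩ := Submodule.exists_mem_ne_zero_of_ne_bot hne
  exact ⟨e, he0, fun m hm hmp => Finset.inf_le (f := id) ((hs m).mpr ⟨hm, hmp⟩) he⟩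

theorem comap_eq_of_isMaximal (σ : A ≃+* A) (hσ : ∀ x, IsNilpotent (x * σ x) → x = 0)
    {p : Ideal A} (hp : p.IsMaximal) : p.comap σ = p := by
  by_contra hne
  have hq : (p.comap σ).IsMaximal := Ideal.comap_isMaximal_of_surjective _ σ.surjective
  obtain ⟨e, he0, he⟩ := exists_ne_zero_forall_isMaximal_ne_mem hp
  -- `e` lies in every maximal ideal except `p`, and `σ e` lies in `p`.
  refine he0 (hσ e (isNilpotent_of_forall_isMaximal_mem fun m hm => ?_))
  by_cases hmp : m = p
  · subst hmp
    exact m.mul_mem_left e (he _ hq hne)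
  · exact m.mul_mem_right _ (he m hm hmp)

end IsArtinianRing

theorem AlgEquiv.apply_apply_eq_self_of_sq_eq {K L : Type*} [CommRing K] [CommRing L] [IsDomain L]
    [Algebra K L] (τ : L ≃ₐ[K] L) {z : L} {a b : K} (h : z ^ 2 = a • z + algebraMap K L b) :
    τ (τ z) = z := by
  have hτ : τ z ^ 2 = a • τ z + algebraMap K L b := by
    rw [← map_pow, h, map_add, map_smul, AlgEquiv.commutes]
  rw [Algebra.smul_def] at h hτ
  have hprod : (z - τ z) * (z + τ z - algebraMap K L a) = 0 := by linear_combination h - hτ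
  rcases mul_eq_zero.mp hprod with hfix | hconj
  · rw [← sub_eq_zero.mp hfix, ← sub_eq_zero.mp hfix]
  · have hτz : τ z = algebraMap K L a - z := by linear_combination hconj
    rw [hτz, map_sub, AlgEquiv.commutes, hτz, sub_sub_cancel]

theorem Real.exists_sq_eq_smul_add_algebraMap {L : Type*} [Field L] [Algebra ℝ L]
    [FiniteDimensional ℝ L] (z : L) : ∃ a b : ℝ, z ^ 2 = a • z + algebraMap ℝ L b := by
  have hz : IsIntegral ℝ z := .of_finite ℝ z
  -- `X ^ 2 %ₘ minpoly ℝ z` is linear because irreducible real polynomials have degree at most 2.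
  have hdeg : (X ^ 2 %ₘ minpoly ℝ z).natDegree ≤ 1 := by
    have := natDegree_modByMonic_lt (X ^ 2) (minpoly.monic hz) (minpoly.ne_one ℝ z)
    have := (minpoly.irreducible hz).natDegree_le_two
    omega
  obtain ⟨a, b, hab⟩ := exists_eq_X_add_C_of_natDegree_le_one hdeg
  refine ⟨a, b, ?_⟩
  have := congrArg (aeval z) (modByMonic_add_div (X ^ 2) (minpoly ℝ z))
  simpa [hab, Algebra.smul_def] using this.symm

theorem AlgEquiv.involutive_of_finiteDimensional_real {L : Type*} [Field L] [Algebra ℝ L]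
    [FiniteDimensional ℝ L] (τ : L ≃ₐ[ℝ] L) : Function.Involutive τ := fun z =>
  let ⟨_, _, h⟩ := Real.exists_sq_eq_smul_add_algebraMap z
  τ.apply_apply_eq_self_of_sq_eq h

theorem AlgEquiv.involutive_of_real_of_isNilpotent_mul_apply {A : Type*} [CommRing A]
    [Algebra ℝ A] [FiniteDimensional ℝ A] (σ : A ≃ₐ[ℝ] A)
    (hσ : ∀ x, IsNilpotent (x * σ x) → x = 0) : Function.Involutive σ := by
  have : IsArtinianRing A := .of_finite ℝ A
  intro x
  suffices IsNilpotent (σ (σ x) - x) from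
    sub_eq_zero.mp (hσ _ ((Commute.all _ _).isNilpotent_mul_right this))
  refine IsArtinianRing.isNilpotent_of_forall_isMaximal_mem fun p hp => ?_
  have hcomap := IsArtinianRing.comap_eq_of_isMaximal σ.toRingEquiv hσ hp
  have hmap : p = p.map σ := by
    nth_rw 2 [← hcomap]
    exact (Ideal.map_comap_of_surjective _ σ.surjective p).symm
  let := Ideal.Quotient.field p
  have := (Ideal.quotientEquivAlg p p σ hmap).involutive_of_finiteDimensional_real
    (Ideal.Quotient.mk p x)
  exact Ideal.Quotient.eq.mp this

/-- If `E` is a finite-dimensional commutative ℚ-algebra and `ρ` an algebra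
automorphism with `Tr(x·ρ(x)) > 0` for all nonzero `x`, then `ρ` is an involution. -/
theorem stmt1 (E : Type*) [CommRing E] [Algebra ℚ E] [FiniteDimensional ℚ E]
    (ρ : E ≃ₐ[ℚ] E)
    (hpos : ∀ x : E, x ≠ 0 → 0 < Algebra.trace ℚ E (x * ρ x)) :
    ∀ x : E, ρ (ρ x) = x := by
  let σ : ℝ ⊗[ℚ] E ≃ₐ[ℝ] ℝ ⊗[ℚ] E := Algebra.TensorProduct.congr AlgEquiv.refl ρ
  have hposℝ : ∀ X, X ≠ 0 → 0 < Algebra.trace ℝ _ (X * σ X) := fun X hX => by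
    have := LinearMap.BilinForm.baseChange_apply_self_pos (L := ℝ)
      (B := (Algebra.traceForm ℚ E).compl₂ ρ.toLinearMap) hpos hX
    rwa [Algebra.baseChange_traceForm_compl₂] at this
  have hσ := σ.involutive_of_real_of_isNilpotent_mul_apply fun X =>
    eq_zero_of_isNilpotent_mul_apply_of_trace_pos hposℝ
  intro x
  exact Algebra.TensorProduct.includeRight_injective (algebraMap ℚ ℝ).injective (hσ (1 ⊗ₜ x))
end

section
/- Let A be a reduced order (a commutative ring whose additive group is free of finite rank over ℤ, with no nonzero nilpotents). Then the intersection of the kernels of all ring homomorphisms A → ℂ is zero. -/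
/-!
In a reduced ring, `0` is the intersection of the minimal primes, so it suffices to realise
each minimal prime `p` as the kernel of a map to `ℂ`. Minimal primes consist of zero divisors,
while nonzero integers are not zero divisors in the torsion-free ring `A`; hence `A ⧸ p` is a
domain of characteristic zero, integral over `ℤ`. Any map from it to `ℂ` over `ℤ` (one exists
since `ℂ` is algebraically closed) is injective by incomparability: its kernel is a prime lying
over `(0) ⊆ ℤ`, as is `(0)` itself.
-/

theorem RingHom.injective_of_isIntegral {R S K : Type*} [CommRing R] [Nontrivial R] [CommRing S]
    [IsDomain S] [Algebra R S] [Algebra.IsIntegral R S] [Semiring K] (f : S →+* K)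
    (hf : Function.Injective (f.comp (algebraMap R S))) : Function.Injective f := by
  refine (injective_iff_ker_eq_bot f).2 (Ideal.eq_bot_of_comap_eq_bot (R := R) ?_)
  rwa [comap_ker, ← injective_iff_ker_eq_bot]

theorem Ideal.charZero_quotient_of_mem_minimalPrimes {A : Type*} [CommRing A] [IsAddTorsionFree A]
    {p : Ideal A} (hp : p ∈ minimalPrimes A) : CharZero (A ⧸ p) := by
  refine charZero_of_inj_zero fun n hn => by_contra fun hn0 => ?_
  have hreg : (n : A) ∈ nonZeroDivisors A := mem_nonZeroDivisors_iff_right.2 fun x hx =>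
    nsmul_right_injective hn0 (by simpa [nsmul_eq_mul, mul_comm] using hx)
  rw [← map_natCast (Ideal.Quotient.mk p), Ideal.Quotient.eq_zero_iff_mem] at hn
  exact notMem_nonZeroDivisors_of_mem_mem_minimalPrimes hn hp hreg

theorem Ideal.exists_ringHom_ker_eq_of_charZero_quotient {A : Type*} [CommRing A]
    [Algebra.IsIntegral ℤ A] (K : Type*) [Field K] [IsAlgClosed K] [CharZero K] (p : Ideal A)
    [p.IsPrime] [CharZero (A ⧸ p)] : ∃ ψ : A →+* K, RingHom.ker ψ = p := by
  have : Algebra.IsIntegral ℤ (A ⧸ p) :=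
    Algebra.IsIntegral.of_surjective (Ideal.Quotient.mkₐ ℤ p) Ideal.Quotient.mk_surjective
  let φ : A ⧸ p →+* K := (IsAlgClosed.lift : A ⧸ p →ₐ[ℤ] K)
  have hφ : Function.Injective φ := φ.injective_of_isIntegral (R := ℤ) (φ.comp _).injective_int
  refine ⟨φ.comp (Ideal.Quotient.mk p), ?_⟩
  rw [← RingHom.comap_ker, (RingHom.injective_iff_ker_eq_bot φ).1 hφ,
    ← RingHom.ker_eq_comap_bot, Ideal.mk_ker]

/-- For a reduced order `A` (commutative ring, additive group free of finite rank
over ℤ, no nonzero nilpotents), the intersection of the kernels of all ring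
homomorphisms `A → ℂ` is zero. -/
theorem stmt2 (A : Type*) [CommRing A] [IsReduced A]
    [Module.Free ℤ A] [Module.Finite ℤ A] :
    (⨅ ψ : A →+* ℂ, RingHom.ker ψ) = ⊥ := by
  have : IsAddTorsionFree A := Module.isTorsionFree_int_iff_isAddTorsionFree.1 inferInstance
  have : Algebra.IsIntegral ℤ A := Algebra.IsIntegral.of_finite ℤ A
  rw [eq_bot_iff, ← Ideal.radical_bot_of_isReduced, ← Ideal.sInf_minimalPrimes]
  refine le_sInf fun p hp => ?_
  have : p.IsPrime := hp.1.1
  have := Ideal.charZero_quotient_of_mem_minimalPrimes hp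
  obtain ⟨ψ, hψ⟩ := Ideal.exists_ringHom_ker_eq_of_charZero_quotient ℂ p
  exact hψ ▸ iInf_le _ ψ
end

section
/- Let A be a CM-order of ℤ-rank n, and let a ∈ A be totally positive, meaning ψ(a) is a positive real number for every ring homomorphism ψ : A → ℂ. Then the following are equivalent: (i) a = 1; (ii) Tr_{A/ℤ}(a) = n; (iii) Tr_{A/ℤ}(a) ≤ n. -/
/-!
Let `P ∈ ℤ[X]` be the characteristic polynomial of multiplication by `a`. A complex root `μ` of
`P` is an eigenvalue of `1 ⊗ a` on `ℂ ⊗ A`, so `1 ⊗ a - μ` is a zero divisor and is killed by a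
character of `ℂ ⊗ A`; restricted to `A` this is a `ψ` with `ψ a = μ`. Hence the roots of `P` are
positive reals; their sum is `Tr(a) ≤ n` and their product is the integer `±P(0)`, hence `≥ 1`.
Summing `log x ≤ x - 1` over the roots (AM–GM) forces every root to be `1`, so `P = (X - 1)ⁿ`,
and by Cayley–Hamilton `a - 1` is nilpotent, hence zero because `A` is reduced.
-/

open Polynomial TensorProduct

theorem Algebra.trace_eq_neg_charpoly_nextCoeff {R S : Type*} [CommRing R] [CommRing S]
    [Algebra R S] [Module.Free R S] [Module.Finite R S] (a : S) :
    Algebra.trace R S a = -(Algebra.lmul R S a).charpoly.nextCoeff := by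
  let b := Module.Free.chooseBasis R S
  rw [Algebra.trace_apply, LinearMap.trace_eq_matrix_trace R b,
    Matrix.trace_eq_neg_charpoly_nextCoeff, LinearMap.charpoly_toMatrix]

theorem exists_algHom_apply_eq_zero_of_not_isUnit {K B : Type*} [Field K] [IsAlgClosed K]
    [CommRing B] [Algebra K B] [Module.Finite K B] {u : B} (hu : ¬IsUnit u) :
    ∃ φ : B →ₐ[K] K, φ u = 0 := by
  obtain ⟨m, hm, hum⟩ :=
    Ideal.exists_le_maximal (Ideal.span {u}) (Ideal.span_singleton_ne_top hu)
  let := Ideal.Quotient.field m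
  exact ⟨(IsAlgClosed.lift : B ⧸ m →ₐ[K] K).comp (Ideal.Quotient.mkₐ K m),
    by simp [Ideal.Quotient.eq_zero_iff_mem.mpr (hum (Ideal.mem_span_singleton_self u))]⟩

theorem exists_algHom_apply_eq_of_isRoot_charpoly {R K A : Type*} [CommRing R] [Field K]
    [IsAlgClosed K] [Algebra R K] [CommRing A] [Algebra R A] [Module.Free R A]
    [Module.Finite R A] (a : A) {μ : K}
    (hμ : ((Algebra.lmul R A a).charpoly.map (algebraMap R K)).IsRoot μ) :
    ∃ ψ : A →ₐ[R] K, ψ a = μ := by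
  have heig : Module.End.HasEigenvalue (Algebra.lmul K (K ⊗[R] A) (1 ⊗ₜ a)) μ := by
    rwa [Module.End.hasEigenvalue_iff_isRoot_charpoly, ← Algebra.baseChange_lmul,
      LinearMap.charpoly_baseChange]
  obtain ⟨v, hv⟩ := heig.exists_hasEigenvector
  have hu : ¬IsUnit (1 ⊗ₜ a - algebraMap K (K ⊗[R] A) μ) := by
    intro h
    apply hv.2
    rw [← h.mul_right_eq_zero, sub_mul, Algebra.algebraMap_eq_smul_one, smul_mul_assoc, one_mul]
    exact sub_eq_zero.mpr hv.apply_eq_smul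
  obtain ⟨φ, hφ⟩ := exists_algHom_apply_eq_zero_of_not_isUnit (K := K) hu
  refine ⟨(φ.restrictScalars R).comp Algebra.TensorProduct.includeRight, ?_⟩
  rw [map_sub, AlgHom.commutes, Algebra.algebraMap_self, RingHom.id_apply, sub_eq_zero] at hφ
  simpa using hφ

theorem Multiset.eq_replicate_one_of_one_le_prod_of_sum_le_card {r : Multiset ℝ}
    (hpos : ∀ x ∈ r, 0 < x) (hprod : 1 ≤ r.prod) (hsum : r.sum ≤ card r) :
    r = replicate (card r) 1 := by
  refine eq_replicate_card.mpr fun x hx => ?_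
  by_contra hne
  have hlog : (r.map Real.log).sum < (r.map (· - 1)).sum :=
    sum_lt_sum (fun y hy => Real.log_le_sub_one_of_pos (hpos y hy))
      ⟨x, hx, Real.log_lt_sub_one_of_pos (hpos x hx) hne⟩
  have hlog_nonneg : 0 ≤ (r.map Real.log).sum := by
    rw [← Real.log_multiset_prod fun y hy => (hpos y hy).ne']
    exact Real.log_nonneg hprod
  simp only [sum_map_sub, map_id', map_const', sum_replicate, nsmul_eq_mul, mul_one] at hlog
  linarith

theorem Polynomial.eq_X_sub_one_pow_of_roots_pos {P : ℤ[X]} (hP : P.Monic)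
    (hroots : ∀ z ∈ (P.map (algebraMap ℤ ℂ)).roots, z.im = 0 ∧ 0 < z.re)
    (hnext : -P.nextCoeff ≤ P.natDegree) : P = (X - 1) ^ P.natDegree := by
  set Q := P.map (algebraMap ℤ ℂ)
  have hQ : Q.Splits := IsAlgClosed.splits Q
  set r := Q.roots.map Complex.re
  have hQr : Q.roots = r.map Complex.ofRealHom := by
    rw [Multiset.map_map]
    conv_lhs => rw [← Multiset.map_id Q.roots]
    exact Multiset.map_congr rfl fun z hz => Complex.ext rfl (by simp [(hroots z hz).1])
  have hpos : ∀ x ∈ r, 0 < x := by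
    simp only [r, Multiset.mem_map]
    rintro _ ⟨z, hz, rfl⟩
    exact (hroots z hz).2
  have hcard : Multiset.card r = P.natDegree := by
    rw [Multiset.card_map, ← hQ.natDegree_eq_card_roots, hP.natDegree_map]
  have hsum : r.sum = -P.nextCoeff := by
    apply Complex.ofRealHom.injective
    rw [map_multiset_sum, ← hQr, ← neg_neg Q.roots.sum,
      ← hQ.nextCoeff_eq_neg_sum_roots_of_monic (hP.map _),
      nextCoeff_map (RingHom.injective_int _)]
    simp
  have hprod : r.prod = ((-1) ^ P.natDegree * P.coeff 0 : ℤ) := by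
    apply Complex.ofRealHom.injective
    have h := hQ.coeff_zero_eq_prod_roots_of_monic (hP.map _)
    rw [coeff_map, hP.natDegree_map, eq_intCast] at h
    rw [map_multiset_prod, ← hQr]
    simp [h, ← mul_assoc, ← mul_pow]
  have hnorm : 1 ≤ r.prod := by
    have h := Multiset.prod_pos hpos
    rw [hprod] at h ⊢
    exact_mod_cast Int.cast_pos.mp h
  have hr := r.eq_replicate_one_of_one_le_prod_of_sum_le_card hpos hnorm
    (by rw [hsum, hcard]; exact_mod_cast hnext)
  apply map_injective (algebraMap ℤ ℂ) (RingHom.injective_int _)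
  change Q = _
  rw [hQ.eq_prod_roots_of_monic (hP.map _), hQr, hr, hcard]
  simp

theorem stmt5_general (A : Type*) [CommRing A] [IsReduced A]
    [Module.Free ℤ A] [Module.Finite ℤ A]
    (a : A)
    (hpos : ∀ ψ : A →+* ℂ, (ψ a).im = 0 ∧ 0 < (ψ a).re) :
    (a = 1 ↔ Algebra.trace ℤ A a = (Module.finrank ℤ A : ℤ)) ∧
    (a = 1 ↔ Algebra.trace ℤ A a ≤ (Module.finrank ℤ A : ℤ)) := by
  have htrace_one : Algebra.trace ℤ A 1 = Module.finrank ℤ A := by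
    simpa using Algebra.trace_algebraMap (R := ℤ) (S := A) 1
  suffices h : Algebra.trace ℤ A a ≤ Module.finrank ℤ A → a = 1 by
    exact ⟨⟨fun ha => ha ▸ htrace_one, fun ht => h ht.le⟩, ⟨fun ha => (ha ▸ htrace_one).le, h⟩⟩
  intro hle
  set P := (Algebra.lmul ℤ A a).charpoly
  have hP : P = (X - 1) ^ P.natDegree := by
    refine eq_X_sub_one_pow_of_roots_pos (LinearMap.charpoly_monic _) (fun z hz => ?_) ?_
    · obtain ⟨ψ, rfl⟩ := exists_algHom_apply_eq_of_isRoot_charpoly a (isRoot_of_mem_roots hz)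
      exact hpos ψ.toRingHom
    · rwa [← Algebra.trace_eq_neg_charpoly_nextCoeff, LinearMap.charpoly_natDegree]
  have hnil : IsNilpotent (a - 1) := by
    have hCH : aeval a P = 0 := Algebra.aeval_self_charpoly_lmul a
    rw [hP] at hCH
    exact ⟨P.natDegree, by simpa using hCH⟩
  exact sub_eq_zero.mp hnil.eq_zero

/-- For a CM-order `A` of ℤ-rank `n` and a totally positive `a ∈ A`, the
conditions `a = 1`, `Tr(a) = n` and `Tr(a) ≤ n` are equivalent. -/
theorem stmt5 (A : Type*) [CommRing A] [IsReduced A]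
    [Module.Free ℤ A] [Module.Finite ℤ A]
    (σ : A ≃+* A)
    (hσ : ∀ (ψ : A →+* ℂ) (x : A), ψ (σ x) = starRingEnd ℂ (ψ x))
    (a : A)
    (hpos : ∀ ψ : A →+* ℂ, (ψ a).im = 0 ∧ 0 < (ψ a).re) :
    (a = 1 ↔ Algebra.trace ℤ A a = (Module.finrank ℤ A : ℤ)) ∧
    (a = 1 ↔ Algebra.trace ℤ A a ≤ (Module.finrank ℤ A : ℤ)) :=
  stmt5_general A a hpos
end

section
/- Let A be a CM-order and a ∈ A. Then a is a root of unity in A if and only if a·ā = 1, where ā denotes the CM involution applied to a. -/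
/-!
Every ring hom `ψ : A →+* ℂ` sends `a * σ a` to `|ψ a|²`, so `a * σ a = 1` says exactly
that `|ψ a| = 1` for all `ψ`, once we know that the `ψ` separate the points of `A`. They do:
`A` embeds into the Artinian ring `ℚ ⊗ A`, whose residue fields are number fields (hence
embed into `ℂ`) and whose Jacobson radical is nil, so the reduced ring `A` injects into the
product of these finitely many number fields. Roots of unity have absolute value one;
conversely, by Kronecker's theorem the image of `a` in each factor is a root of unity, and
finiteness of the product gives a common order.
-/

open TensorProduct

theorem Ideal.numberField_quotient_of_isMaximal {B : Type*} [CommRing B] [Algebra ℚ B]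
    [Module.Finite ℚ B] (M : Ideal B) [M.IsMaximal] :
    letI := Ideal.Quotient.field M
    NumberField (B ⧸ M) :=
  letI := Ideal.Quotient.field M
  NumberField.of_module_finite ℚ (B ⧸ M)

theorem isOfFinOrder_map_of_forall_norm_eq_one {A K : Type*} [CommRing A] [Field K]
    [NumberField K] (q : A →+* K) {a : A} (ha : IsIntegral ℤ a)
    (hnorm : ∀ ψ : A →+* ℂ, ‖ψ a‖ = 1) : IsOfFinOrder (q a) := by
  obtain ⟨n, hn, hpow⟩ := NumberField.Embeddings.pow_eq_one_of_norm_eq_one K ℂ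
    (ha.map q.toIntAlgHom) fun φ => hnorm (φ.comp q)
  exact isOfFinOrder_iff_pow_eq_one.mpr ⟨n, hn, hpow⟩

namespace MaximalSpectrum

variable (B : Type*) [CommRing B]

noncomputable def toPiQuotient : B →+* Π M : MaximalSpectrum B, B ⧸ M.asIdeal :=
  RingHom.pi fun M => Ideal.Quotient.mk M.asIdeal

variable {B}

theorem isNilpotent_of_toPiQuotient_eq_zero [IsArtinianRing B] {x : B}
    (hx : toPiQuotient B x = 0) : IsNilpotent x :=
  nilpotent_iff_mem_prime.mpr fun P _ =>
    Ideal.Quotient.eq_zero_iff_mem.mp (congr_fun hx ⟨P, IsArtinianRing.isMaximal_of_isPrime P⟩)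

theorem injective_toPiQuotient_comp {A : Type*} [CommRing A] [IsReduced A] [IsArtinianRing B]
    {ι : A →+* B} (hι : Function.Injective ι) :
    Function.Injective ((toPiQuotient B).comp ι) := by
  refine (injective_iff_map_eq_zero _).mpr fun x hx => IsReduced.eq_zero x ?_
  obtain ⟨k, hk⟩ := isNilpotent_of_toPiQuotient_eq_zero hx
  exact ⟨k, hι (by rw [map_pow, hk, map_zero])⟩

end MaximalSpectrum

section FiniteRatAlgebra

variable {A B : Type*} [CommRing A] [IsReduced A] [CommRing B] [Algebra ℚ B]
  [Module.Finite ℚ B] {ι : A →+* B}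

theorem eq_of_forall_ringHom_complex_eq (hι : Function.Injective ι) {x y : A}
    (h : ∀ ψ : A →+* ℂ, ψ x = ψ y) : x = y := by
  have := IsArtinianRing.of_finite ℚ B
  refine MaximalSpectrum.injective_toPiQuotient_comp hι (funext fun M => ?_)
  let := Ideal.Quotient.field M.asIdeal
  have := M.asIdeal.numberField_quotient_of_isMaximal
  obtain ⟨φ⟩ : Nonempty (B ⧸ M.asIdeal →+* ℂ) := inferInstance
  exact φ.injective (h (φ.comp ((Ideal.Quotient.mk M.asIdeal).comp ι)))

theorem isOfFinOrder_of_forall_norm_eq_one (hι : Function.Injective ι) {a : A}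
    (ha : IsIntegral ℤ a) (hnorm : ∀ ψ : A →+* ℂ, ‖ψ a‖ = 1) : IsOfFinOrder a := by
  have := IsArtinianRing.of_finite ℚ B
  refine (MaximalSpectrum.injective_toPiQuotient_comp hι).isOfFinOrder_iff
    (f := ((MaximalSpectrum.toPiQuotient B).comp ι).toMonoidHom) |>.mp
    (IsOfFinOrder.pi fun M => ?_)
  let := Ideal.Quotient.field M.asIdeal
  have := M.asIdeal.numberField_quotient_of_isMaximal
  exact isOfFinOrder_map_of_forall_norm_eq_one ((Ideal.Quotient.mk M.asIdeal).comp ι) ha hnorm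

end FiniteRatAlgebra

theorem norm_eq_one_iff_map_mul_eq_one {A : Type*} [CommRing A] {σ : A →+* A} {ψ : A →+* ℂ}
    (hσ : ∀ x, ψ (σ x) = starRingEnd ℂ (ψ x)) (a : A) : ‖ψ a‖ = 1 ↔ ψ (a * σ a) = 1 := by
  rw [map_mul, hσ, Complex.mul_conj', ← Complex.ofReal_pow, Complex.ofReal_eq_one,
    pow_eq_one_iff_of_nonneg (norm_nonneg _) two_ne_zero]

/-- In a CM-order `A` with involution `σ`, an element `a` is a root of unity
iff `a · σ a = 1`. -/
theorem stmt6 (A : Type*) [CommRing A] [IsReduced A]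
    [Module.Free ℤ A] [Module.Finite ℤ A]
    (σ : A ≃+* A)
    (hσ : ∀ (ψ : A →+* ℂ) (x : A), ψ (σ x) = starRingEnd ℂ (ψ x))
    (a : A) :
    (∃ m : ℕ, 0 < m ∧ a ^ m = 1) ↔ a * σ a = 1 := by
  have hι : Function.Injective (Algebra.TensorProduct.includeRight : A →ₐ[ℤ] ℚ ⊗[ℤ] A) :=
    Algebra.TensorProduct.includeRight_injective (algebraMap ℤ ℚ).injective_int
  have hnorm (ψ : A →+* ℂ) : ‖ψ a‖ = 1 ↔ ψ (a * σ a) = 1 :=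
    norm_eq_one_iff_map_mul_eq_one (σ := σ.toRingHom) (hσ ψ) a
  rw [← isOfFinOrder_iff_pow_eq_one]
  refine ⟨fun ha => eq_of_forall_ringHom_complex_eq hι fun ψ => ?_, fun h => ?_⟩
  · rw [map_one, ← hnorm]
    exact (ψ.toMonoidHom.isOfFinOrder ha).norm_eq_one
  · exact isOfFinOrder_of_forall_norm_eq_one hι (Algebra.IsIntegral.isIntegral a)
      fun ψ => (hnorm ψ).mpr (by rw [h, map_one])
end

section
/- Let A be an order, 𝔭₁,…,𝔭ₘ maximal ideals of A (with finite residue fields), and I a fractional A-ideal. Then the cardinality of I / (𝔭₁⋯𝔭ₘ·I) is at least the product ∏ᵢ #(A/𝔭ᵢ). -/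
/-!
The index of `𝔭₁⋯𝔭ₘ I` in `I` is multiplicative along the chain `I ⊇ 𝔭₁I ⊇ 𝔭₁𝔭₂I ⊇ ⋯`, so it
suffices that each step `J ⊇ 𝔭J` has index at least `#(A/𝔭)`. Here `J/𝔭J` is a finite-dimensional
vector space over `A/𝔭`, and it is nonzero by Nakayama: `J` is finitely generated and faithful,
since it contains a nonzero integer multiple of `1`.
-/

open scoped TensorProduct

theorem Module.card_le_card_of_nontrivial (K V : Type*) [Field K] [AddCommGroup V] [Module K V]
    [Finite V] [Nontrivial V] : Nat.card K ≤ Nat.card V := by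
  obtain ⟨v, hv⟩ := exists_ne (0 : V)
  exact Nat.card_le_card_of_injective _ (smul_left_injective K hv)

section CommRing

variable {R M : Type*} [CommRing R] [AddCommGroup M] [Module R M]

theorem Submodule.ideal_smul_top_ne_top_of_annihilator_le [Module.Finite R M] {𝔭 : Ideal R}
    (h𝔭 : 𝔭 ≠ ⊤) (hann : Module.annihilator R M ≤ 𝔭) : 𝔭 • (⊤ : Submodule R M) ≠ ⊤ := by
  intro htop
  obtain ⟨r, hr1, hr0⟩ :=
    exists_sub_one_mem_and_smul_eq_zero_of_fg_of_le_smul 𝔭 ⊤ Module.Finite.fg_top htop.ge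
  have hr : r ∈ 𝔭 := hann (Module.mem_annihilator.2 fun m => hr0 m trivial)
  exact h𝔭 ((Ideal.eq_top_iff_one _).2 (by simpa using 𝔭.sub_mem hr hr1))

theorem card_quotient_le_card_quotient_ideal_smul_top [Module.Finite R M] {𝔭 : Ideal R}
    [𝔭.IsMaximal] [Finite (R ⧸ 𝔭)] (hann : Module.annihilator R M ≤ 𝔭) :
    Nat.card (R ⧸ 𝔭) ≤ Nat.card (M ⧸ 𝔭 • (⊤ : Submodule R M)) := by
  let := Ideal.Quotient.field 𝔭
  have : Nontrivial (M ⧸ 𝔭 • (⊤ : Submodule R M)) :=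
    Submodule.Quotient.nontrivial_iff.2
      (Submodule.ideal_smul_top_ne_top_of_annihilator_le (Ideal.IsMaximal.ne_top ‹_›) hann)
  have : Finite (M ⧸ 𝔭 • (⊤ : Submodule R M)) := Module.finite_of_finite (R ⧸ 𝔭)
  exact Module.card_le_card_of_nontrivial _ _

theorem card_quotient_le_relIndex_ideal_smul {N : Submodule R M} (hN : N.FG) {𝔭 : Ideal R}
    [𝔭.IsMaximal] [Finite (R ⧸ 𝔭)] (hann : Module.annihilator R N ≤ 𝔭) :
    Nat.card (R ⧸ 𝔭) ≤ (𝔭 • N).toAddSubgroup.relIndex N.toAddSubgroup := by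
  have : Module.Finite R N := Module.Finite.iff_fg.2 hN
  have hcomap : (𝔭 • N).comap N.subtype = 𝔭 • ⊤ := by
    rw [Submodule.comap_smul'' N.injective_subtype (by simp), Submodule.comap_subtype_self]
  change _ ≤ Nat.card (N ⧸ (𝔭 • N).comap N.subtype)
  rw [hcomap]
  exact card_quotient_le_card_quotient_ideal_smul_top hann

theorem Ideal.natCast_card_quotient_mem (J : Ideal R) : (Nat.card (R ⧸ J) : R) ∈ J := by
  rw [← Ideal.Quotient.eq_zero_iff_mem, map_natCast, ← nsmul_one]
  exact card_nsmul_eq_zero'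

theorem Ideal.exists_natCast_mem_prod_of_finite_quotient {ι : Type*} (s : Finset ι)
    (𝔭 : ι → Ideal R) (hfin : ∀ i, Finite (R ⧸ 𝔭 i)) :
    ∃ k : ℕ, k ≠ 0 ∧ (k : R) ∈ ∏ i ∈ s, 𝔭 i := by
  refine ⟨∏ i ∈ s, Nat.card (R ⧸ 𝔭 i), Finset.prod_ne_zero_iff.2 fun i _ => ?_, ?_⟩
  · have := hfin i
    exact Nat.card_pos.ne'
  · rw [Nat.cast_prod]
    exact Ideal.prod_mem_prod fun i _ => (𝔭 i).natCast_card_quotient_mem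

end CommRing

section Order

variable {A : Type*} [CommRing A] [Module.Free ℤ A]

theorem annihilator_eq_bot_of_zsmul_one_mem {N : Submodule A (A ⊗[ℤ] ℚ)} {n : ℤ} (hn : n ≠ 0)
    (hN : n • (1 : A ⊗[ℤ] ℚ) ∈ N) : Module.annihilator A N = ⊥ := by
  refine eq_bot_iff.2 fun r hr => ?_
  have h : algebraMap A (A ⊗[ℤ] ℚ) (n • r) = 0 := by
    rw [map_zsmul, Algebra.algebraMap_eq_smul_one, smul_comm]
    exact congrArg Subtype.val (Module.mem_annihilator.1 hr ⟨_, hN⟩)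
  have hinj : Function.Injective (algebraMap A (A ⊗[ℤ] ℚ)) :=
    Algebra.TensorProduct.includeLeft_injective (S := A) (algebraMap ℤ ℚ).injective_int
  exact (smul_eq_zero.1 (hinj.eq_iff' (map_zero _) |>.1 h)).resolve_left hn

theorem prod_card_quotient_le_relIndex_prod_smul [Module.Finite ℤ A] {ι : Type*}
    (𝔭 : ι → Ideal A) (hmax : ∀ i, (𝔭 i).IsMaximal) (hfin : ∀ i, Finite (A ⧸ 𝔭 i))
    {I : Submodule A (A ⊗[ℤ] ℚ)} (hfg : I.FG) {n : ℤ} (hn : n ≠ 0)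
    (hI : n • (1 : A ⊗[ℤ] ℚ) ∈ I) (s : Finset ι) :
    ∏ i ∈ s, Nat.card (A ⧸ 𝔭 i) ≤ ((∏ i ∈ s, 𝔭 i) • I).toAddSubgroup.relIndex I.toAddSubgroup := by
  induction s using Finset.cons_induction with
  | empty => simp
  | cons a t _ ih =>
    have := hmax a
    have := hfin a
    have : IsNoetherianRing A := IsNoetherianRing.of_finite ℤ A
    set X := (∏ i ∈ t, 𝔭 i) • I
    have hXfg : X.FG := Submodule.FG.smul (IsNoetherian.noetherian _) hfg
    obtain ⟨k, hk, hkX⟩ := Ideal.exists_natCast_mem_prod_of_finite_quotient t 𝔭 hfin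
    have hX : ((k : ℤ) * n) • (1 : A ⊗[ℤ] ℚ) ∈ X := by
      rw [mul_smul, ← Int.cast_smul_eq_zsmul A, Int.cast_natCast]
      exact Submodule.smul_mem_smul hkX hI
    have hann : Module.annihilator A X ≤ 𝔭 a :=
      (annihilator_eq_bot_of_zsmul_one_mem (mul_ne_zero (by exact_mod_cast hk) hn) hX).trans_le
        bot_le
    rw [Finset.prod_cons, Finset.prod_cons, Submodule.mul_smul,
      ← AddSubgroup.relIndex_mul_relIndex _ X.toAddSubgroup _
        (Submodule.toAddSubgroup_mono Submodule.smul_le_right)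
        (Submodule.toAddSubgroup_mono Submodule.smul_le_right)]
    exact Nat.mul_le_mul (card_quotient_le_relIndex_ideal_smul hXfg hann) ih

end Order

/-- If `𝔭 i` are maximal ideals of an order `A` with finite residue fields and
`I` is a fractional `A`-ideal, then `#(I / 𝔭₁⋯𝔭ₘ I) ≥ ∏ᵢ #(A/𝔭ᵢ)`. -/
theorem stmt9 (A : Type*) [CommRing A] [Module.Free ℤ A] [Module.Finite ℤ A]
    (ι : Type*) [Fintype ι] (𝔭 : ι → Ideal A)
    (hmax : ∀ i, (𝔭 i).IsMaximal) (hfin : ∀ i, Finite (A ⧸ 𝔭 i))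
    (I : Submodule A (A ⊗[ℤ] ℚ)) (hfg : I.FG)
    (hspan : ∀ x : A ⊗[ℤ] ℚ, ∃ n : ℤ, n ≠ 0 ∧ n • x ∈ I) :
    ∏ i, Nat.card (A ⧸ 𝔭 i) ≤
      Nat.card (↥I ⧸ Submodule.comap I.subtype ((∏ i, 𝔭 i) • I)) := by
  obtain ⟨n, hn, hnI⟩ := hspan 1
  -- `relIndex` unfolds definitionally to the cardinality of the quotient in the goal.
  exact prod_card_quotient_le_relIndex_prod_smul 𝔭 hmax hfin hfg hn hnI Finset.univ
end

section
/- Let A be an order of rank n ≥ 1 and 𝔞 = ∏_𝔭 𝔭^{t(𝔭)} a product of powers of maximal ideals of A of finite index. Then the exponent of the unit group (A/𝔞)^× divides lcm over 𝔭 with t(𝔭) > 0 of (N(𝔭) − 1)·p_𝔭^{t(𝔭)−1}, where p_𝔭 = char(A/𝔭) and N(𝔭) = #(A/𝔭). -/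
/-!
By the Chinese remainder theorem `(A/𝔞)ˣ ≅ ∏ (A/𝔭^t)ˣ`, so it suffices to bound the exponent of
each `(A/𝔭^t)ˣ`. A unit `a` of `A/𝔭^t` satisfies `a^(N(𝔭)-1) ≡ 1 mod 𝔭` by Fermat's little theorem
in the residue field, and since `p_𝔭 ∈ 𝔭`, raising to the `p_𝔭`-th power moves an element that is
`≡ 1 mod 𝔭^k` to one that is `≡ 1 mod 𝔭^(k+1)`.
-/

open Function

namespace Ideal

variable {R : Type*} [CommRing R]

theorem pow_sub_one_mem_mul_of_sub_one_mem {I q : Ideal R} (hIq : I ≤ q) {b : R}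
    (hb : b - 1 ∈ I) {n : ℕ} (hn : (n : R) ∈ q) : b ^ n - 1 ∈ I * q := by
  -- `b ^ n - 1 = (b - 1) * ∑ b ^ i`, and the sum is `≡ n ≡ 0 mod q` because `b ≡ 1 mod q`.
  have hgeom : ∑ i ∈ Finset.range n, b ^ i ∈ q := by
    have hb1 : Quotient.mk q b = 1 := by
      rw [← map_one (Quotient.mk q), Quotient.eq]
      exact hIq hb
    rw [← Quotient.eq_zero_iff_mem, map_sum] at *
    simpa [hb1] using hn
  rw [← mul_geom_sum]
  exact mul_mem_mul hb hgeom

theorem pow_pow_sub_one_mem_pow {q : Ideal R} {a : R} (ha : a - 1 ∈ q) {n : ℕ}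
    (hn : (n : R) ∈ q) : ∀ m : ℕ, a ^ n ^ m - 1 ∈ q ^ (m + 1)
  | 0 => by simpa using ha
  | m + 1 => by
    rw [pow_succ n, pow_mul, pow_succ q]
    exact pow_sub_one_mem_mul_of_sub_one_mem (pow_le_self m.succ_ne_zero)
      (pow_pow_sub_one_mem_pow ha hn m) hn

theorem pow_card_sub_one_sub_one_mem (𝔭 : Ideal R) [𝔭.IsMaximal] [Finite (R ⧸ 𝔭)] {a : R}
    (ha : IsUnit (Quotient.mk 𝔭 a)) : a ^ (Nat.card (R ⧸ 𝔭) - 1) - 1 ∈ 𝔭 := by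
  let := Quotient.field 𝔭
  have := Fintype.ofFinite (R ⧸ 𝔭)
  rw [← Quotient.eq, map_pow, map_one, Nat.card_eq_fintype_card]
  exact FiniteField.pow_card_sub_one_eq_one _ ha.ne_zero

theorem natCast_ringChar_quotient_mem (I : Ideal R) : (ringChar (R ⧸ I) : R) ∈ I := by
  rw [← Quotient.eq_zero_iff_mem, map_natCast, ringChar.Nat.cast_ringChar]

theorem exponent_units_quotient_pow_dvd (𝔭 : Ideal R) [𝔭.IsMaximal] [Finite (R ⧸ 𝔭)] (t : ℕ) :
    Monoid.exponent (R ⧸ 𝔭 ^ t)ˣ ∣ (Nat.card (R ⧸ 𝔭) - 1) * ringChar (R ⧸ 𝔭) ^ (t - 1) := by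
  rcases t with _ | t
  · have : Subsingleton (R ⧸ 𝔭 ^ 0) := Quotient.subsingleton_iff.2 (pow_zero 𝔭 ▸ one_eq_top)
    simp
  refine Monoid.exponent_dvd_of_forall_pow_eq_one fun u => ?_
  obtain ⟨a, ha⟩ := Quotient.mk_surjective (u : R ⧸ 𝔭 ^ (t + 1))
  have hunit : IsUnit (Quotient.mk 𝔭 a) := by
    simpa [← ha] using u.isUnit.map (Quotient.factor (pow_le_self t.succ_ne_zero))
  have key := pow_pow_sub_one_mem_pow (pow_card_sub_one_sub_one_mem 𝔭 hunit)
    (natCast_ringChar_quotient_mem 𝔭) t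
  rw [← pow_mul, ← Quotient.eq, map_pow, map_one, ha] at key
  exact Units.ext (by simpa using key)

theorem exponent_units_quotient_prod {ι : Type*} (s : Finset ι) (I : ι → Ideal R)
    (hI : (s : Set ι).Pairwise (IsCoprime on I)) :
    Monoid.exponent (R ⧸ ∏ i ∈ s, I i)ˣ = s.lcm fun i => Monoid.exponent (R ⧸ I i)ˣ := by
  classical
  have hcop : Pairwise (IsCoprime on fun i : s => I i) := fun i j h =>
    hI i.2 j.2 (Subtype.coe_ne_coe.2 h)
  have hprod : ∏ i ∈ s, I i = ⨅ i : s, I i := by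
    rw [prod_eq_iInf_of_pairwise_isCoprime hI, iInf_subtype']
  let crt : (R ⧸ ∏ i ∈ s, I i)ˣ ≃* ((i : s) → (R ⧸ I i)ˣ) :=
    (Units.mapEquiv ((quotEquivOfEq hprod).trans
      (quotientInfRingEquivPiQuotient _ hcop)).toMulEquiv).trans MulEquiv.piUnits
  rw [Monoid.exponent_eq_of_mulEquiv crt, Monoid.exponent_pi, Finset.univ_eq_attach]
  exact (Finset.lcm_image (f := fun i => Monoid.exponent (R ⧸ I i)ˣ) (g := Subtype.val)
    s.attach).symm.trans (by simp)

end Ideal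

theorem stmt15_general (A : Type*) [CommRing A]
    (S : Finset (Ideal A)) (t : Ideal A → ℕ)
    (hmax : ∀ 𝔭 ∈ S, 𝔭.IsMaximal) (hfin : ∀ 𝔭 ∈ S, Finite (A ⧸ 𝔭)) :
    Monoid.exponent (A ⧸ ∏ 𝔭 ∈ S, 𝔭 ^ t 𝔭)ˣ ∣
      S.lcm fun 𝔭 => (Nat.card (A ⧸ 𝔭) - 1) * (ringChar (A ⧸ 𝔭)) ^ (t 𝔭 - 1) := by
  have hcop : (S : Set (Ideal A)).Pairwise (IsCoprime on fun 𝔭 => 𝔭 ^ t 𝔭) :=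
    fun 𝔭 h𝔭 𝔮 h𝔮 hne => (Ideal.isCoprime_iff_sup_eq.2
      ((hmax 𝔭 h𝔭).coprime_of_ne (hmax 𝔮 h𝔮) hne)).pow
  rw [Ideal.exponent_units_quotient_prod S _ hcop]
  refine Finset.lcm_mono_fun fun 𝔭 h𝔭 => ?_
  have := hmax 𝔭 h𝔭
  have := hfin 𝔭 h𝔭
  exact Ideal.exponent_units_quotient_pow_dvd 𝔭 (t 𝔭)

/-- Let `A` be an order and `𝔞 = ∏_{𝔭 ∈ S} 𝔭^{t 𝔭}` a product of powers of
maximal ideals of finite index. Then the exponent of `(A/𝔞)ˣ` divides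
`lcm_{𝔭} (N(𝔭) − 1)·p_𝔭^{t 𝔭 − 1}`. -/
theorem stmt15 (A : Type*) [CommRing A] [Module.Free ℤ A] [Module.Finite ℤ A]
    (hn : 1 ≤ Module.finrank ℤ A)
    (S : Finset (Ideal A)) (t : Ideal A → ℕ)
    (hmax : ∀ 𝔭 ∈ S, 𝔭.IsMaximal) (hfin : ∀ 𝔭 ∈ S, Finite (A ⧸ 𝔭))
    (ht : ∀ 𝔭 ∈ S, 0 < t 𝔭) :
    Monoid.exponent (A ⧸ ∏ 𝔭 ∈ S, 𝔭 ^ t 𝔭)ˣ ∣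
      S.lcm fun 𝔭 => (Nat.card (A ⧸ 𝔭) - 1) * (ringChar (A ⧸ 𝔭)) ^ (t 𝔭 - 1) :=
  stmt15_general A S t hmax hfin
end

section
/- Let A be a CM-order, L an A-lattice of rank n with associated pairing φ : L × L → A_ℚ satisfying Tr(a·φ(x,y)) = ⟨ax, y⟩, and let 𝔞 be an ideal of finite index in A such that every nonzero β ∈ 𝔞L satisfies ⟨β,β⟩ ≥ (2^{n/2}+1)²·rank_ℤ(A). Then in each coset C ∈ L/𝔞L there is at most one element y with ⟨y,y⟩ = rank_ℤ(A), and any such y is the unique shortest element of C. -/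
/-- Short vectors in lattice cosets: if every nonzero `β ∈ 𝔞L` satisfies
`⟨β,β⟩ ≥ (2^{n/2}+1)²·rank_ℤ(A)` (where `n = rank_ℤ L`), then each coset of
`𝔞L` in `L` contains at most one vector `y` with `⟨y,y⟩ = rank_ℤ(A)`, and such
a `y` is the unique shortest element of its coset. -/
theorem stmt18 (A : Type*) [CommRing A] [IsReduced A]
    [Module.Free ℤ A] [Module.Finite ℤ A]
    (σ : A ≃+* A)
    (hσ : ∀ (ψ : A →+* ℂ) (x : A), ψ (σ x) = starRingEnd ℂ (ψ x))
    (L : Type*) [AddCommGroup L] [Module A L]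
    [Module.Free ℤ L] [Module.Finite ℤ L]
    (B : L → L → ℤ)
    (hadd1 : ∀ x x' y : L, B (x + x') y = B x y + B x' y)
    (hadd2 : ∀ x y y' : L, B x (y + y') = B x y + B x y')
    (hsymm : ∀ x y : L, B x y = B y x)
    (hposdef : ∀ x : L, x ≠ 0 → 0 < B x x)
    (hcompat : ∀ (a : A) (x y : L), B (a • x) y = B x (σ a • y))
    (𝔞 : Ideal A) (hfin : Finite (A ⧸ 𝔞))
    (hbound : ∀ β ∈ 𝔞 • (⊤ : Submodule A L), β ≠ (0 : L) →
      ((2 : ℝ) ^ ((Module.finrank ℤ L : ℝ) / 2) + 1) ^ 2 * (Module.finrank ℤ A : ℝ)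
        ≤ (B β β : ℝ))
    (y z : L) (hyz : y - z ∈ 𝔞 • (⊤ : Submodule A L))
    (hy : B y y = (Module.finrank ℤ A : ℤ)) :
    (B z z = (Module.finrank ℤ A : ℤ) → y = z) ∧ (z ≠ y → B y y < B z z) := by
  by_cases hzy : y = z
  · subst hzy
    exact ⟨fun _ => rfl, fun h => absurd rfl h⟩
  · -- y ≠ z : we derive B y y < B z z and a contradiction with B z z = rank
    have hβ : y - z ≠ 0 := sub_ne_zero.mpr hzy
    haveI hLnt : Nontrivial L := ⟨y, z, hzy⟩
    haveI hAnt : Nontrivial A := by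
      by_contra h
      haveI : Subsingleton A := not_nontrivial_iff_subsingleton.mp h
      have h10 : (1 : A) = 0 := Subsingleton.elim _ _
      exact hzy (by
        have hall : ∀ x : L, x = 0 := fun x => by
          calc x = (1 : A) • x := (one_smul A x).symm
            _ = (0 : A) • x := by rw [h10]
            _ = 0 := zero_smul A x
        rw [hall y, hall z])
    -- ranks are positive
    have hnpos : 0 < Module.finrank ℤ L := Module.finrank_pos
    have hrpos : 0 < Module.finrank ℤ A := Module.finrank_pos
    -- basic bilinearity facts
    have hom1 : ∀ w : L, ∃ f : L →+ ℤ, ∀ x, f x = B x w := fun w =>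
      ⟨AddMonoidHom.mk' (fun x => B x w) (fun a b => hadd1 a b w), fun _ => rfl⟩
    have hz1 : ∀ (n : ℤ) (x w : L), B (n • x) w = n * B x w := by
      intro n x w
      obtain ⟨f, hf⟩ := hom1 w
      rw [← hf, map_zsmul, hf, smul_eq_mul]
    have hsub1 : ∀ (x x' w : L), B (x - x') w = B x w - B x' w := by
      intro x x' w
      obtain ⟨f, hf⟩ := hom1 w
      rw [← hf, map_sub, hf, hf]
    have hz2 : ∀ (n : ℤ) (x w : L), B x (n • w) = n * B x w := fun n x w => by
      rw [hsymm, hz1, hsymm]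
    have hsub2 : ∀ (x w w' : L), B x (w - w') = B x w - B x w' := fun x w w' => by
      rw [hsymm, hsub1, hsymm x w, hsymm x w']
    have hB0 : ∀ x : L, B 0 x = 0 := fun x => by
      have h := hadd1 0 0 x
      simp only [add_zero] at h
      linarith
    have hnonneg : ∀ x : L, 0 ≤ B x x := by
      intro x
      rcases eq_or_ne x 0 with h | h
      · simp [h, hB0]
      · exact (hposdef x h).le
    -- Cauchy–Schwarz over ℤ
    have hcs : ∀ x w : L, (B x w) ^ 2 ≤ B x x * B w w := by
      intro x w
      rcases eq_or_ne x 0 with h | h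
      · simp [h, hB0]
      · have hx : 0 < B x x := hposdef x h
        have hq : 0 ≤ B (B x x • w - B x w • x) (B x x • w - B x w • x) :=
          hnonneg _
        have he : B (B x x • w - B x w • x) (B x x • w - B x w • x)
            = B x x * (B x x * B w w - (B x w) ^ 2) := by
          simp only [hsub1, hsub2, hz1, hz2]
          rw [hsymm w x]
          ring
        rw [he] at hq
        nlinarith
    -- expansion of B (y-z) (y-z)
    have hexp : B (y - z) (y - z) = B y y - 2 * B y z + B z z := by
      simp only [hsub1, hsub2]
      rw [hsymm z y]; ring
    -- pass to the reals
    set N : ℝ := (Module.finrank ℤ L : ℝ) with hN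
    set R : ℝ := (Module.finrank ℤ A : ℝ) with hR
    have hR1 : (1 : ℝ) ≤ R := by
      rw [hR]; exact_mod_cast hrpos
    have hN1 : (1 : ℝ) ≤ N := by
      rw [hN]; exact_mod_cast hnpos
    have hb := hbound (y - z) hyz hβ
    rw [hexp, hy] at hb
    push_cast at hb
    rw [← hR] at hb
    set t : ℝ := (2 : ℝ) ^ (N / 2) with ht
    have ht0 : 0 < t := Real.rpow_pos_of_pos (by norm_num) _
    have ht2 : 2 ≤ t ^ 2 := by
      have : t ^ 2 = (2 : ℝ) ^ (N / 2 + N / 2) := by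
        rw [ht, pow_two, ← Real.rpow_add (by norm_num : (0:ℝ) < 2)]
      rw [this]
      have : N / 2 + N / 2 = N := by ring
      rw [this]
      calc (2 : ℝ) = (2 : ℝ) ^ (1 : ℝ) := by norm_num
        _ ≤ (2 : ℝ) ^ N := by
            apply Real.rpow_le_rpow_left_iff (by norm_num : (1:ℝ) < 2) |>.mpr hN1
    -- Cauchy–Schwarz in ℝ
    set c : ℝ := (B z z : ℝ) with hc
    set a : ℝ := (B y z : ℝ) with ha
    have hcszy : a ^ 2 ≤ R * c := by
      rw [ha, hc, hR]
      have h := hcs y z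
      rw [hy] at h
      exact_mod_cast h
    have hc0 : (0 : ℝ) ≤ c := by rw [hc]; exact_mod_cast hnonneg z
    -- |a| ≤ √R √c
    have hR0 : (0 : ℝ) ≤ R := by linarith
    have hsq : |a| ≤ Real.sqrt R * Real.sqrt c := by
      have h1 : Real.sqrt (a ^ 2) ≤ Real.sqrt (R * c) := Real.sqrt_le_sqrt hcszy
      rwa [Real.sqrt_sq_eq_abs, Real.sqrt_mul hR0] at h1
    have hna : -a ≤ Real.sqrt R * Real.sqrt c := le_trans (neg_le_abs a) hsq
    set u : ℝ := Real.sqrt c with hu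
    set v : ℝ := Real.sqrt R with hv
    have hu0 : 0 ≤ u := Real.sqrt_nonneg _
    have hv0 : 0 ≤ v := Real.sqrt_nonneg _
    have hu2 : u ^ 2 = c := Real.sq_sqrt hc0
    have hv2 : v ^ 2 = R := Real.sq_sqrt hR0
    -- main numeric deduction : R < c
    have hkey : ((t + 1) * v) ^ 2 ≤ (u + v) ^ 2 := by nlinarith
    have htv : (t + 1) * v ≤ u + v := by
      have h1 : 0 ≤ (t + 1) * v := mul_nonneg (by linarith) hv0
      nlinarith
    have huv : t * v ≤ u := by linarith
    have hRc : R < c := by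
      nlinarith [mul_le_mul huv huv (mul_nonneg ht0.le hv0) hu0,
        mul_nonneg (by linarith : (0:ℝ) ≤ t ^ 2 - 2) (sq_nonneg v)]
    have hlt : B y y < B z z := by
      rw [hy]
      rw [hR, hc] at hRc
      exact_mod_cast hRc
    refine ⟨fun hzr => ?_, fun _ => hlt⟩
    exfalso
    rw [hy] at hlt
    rw [hzr] at hlt
    exact lt_irrefl _ hlt
end

section
/- Let A be a CM-order and let WPic(A) be the quotient of the group of pairs (I,w), where I is an invertible fractional A-ideal and w ∈ A_ℚ is totally positive (ψ(w) ∈ ℝ_{>0} for all ψ : A_ℚ → ℂ) with I·Ī = Aw, by the subgroup {(Av, v·v̄) : v ∈ A_ℚ^×}. Let Cl⁻(A) be the group of classes of invertible fractional A-ideals I with I·Ī principal, modulo principal ideals. Then the natural homomorphism h : WPic(A) → Cl⁻(A), [(I,w)] ↦ [I], has kernel and cokernel both annihilated by 2. -/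
/-!
Since `A_ℚ` is a reduced finite `ℚ`-algebra, its elements are separated by the ring maps
`ψ : A_ℚ → ℂ`, and on these `σ` acts as complex conjugation (`A_ℚ` is a localization of `A`);
so `σ` is an involution of `A_ℚ` fixing every totally real element.

Kernel: if `I = Av` and `IĪ = Aw`, then `w` and `v σ(v)` generate the same ideal, so `w` is a
unit, and `u = w v / σ(v)` satisfies `Au = I²` and `u σ(u) = w σ(w) = w²`.
Cokernel: if `IĪ = Av`, conjugating gives `A σ(v) = Av`, hence `I² (I²)‾ = (Av)² = A v σ(v)`,
and `ψ (v σ(v)) = |ψ v|² > 0`.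
-/

open scoped TensorProduct Pointwise
open Submodule

theorem eq_zero_of_forall_ringHom_complex {B : Type*} [CommRing B] [IsReduced B] [Algebra ℚ B]
    [Module.Finite ℚ B] {x : B} (hx : ∀ ψ : B →+* ℂ, ψ x = 0) : x = 0 := by
  have : IsArtinianRing B := isArtinian_of_tower ℚ inferInstance
  by_contra hx0
  have hx_nil : ¬IsNilpotent x := mt (IsReduced.eq_zero x) hx0
  rw [nilpotent_iff_mem_prime] at hx_nil
  push Not at hx_nil
  obtain ⟨p, hp, hxp⟩ := hx_nil
  have : p.IsMaximal := (IsArtinianRing.isPrime_iff_isMaximal p).mp hp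
  let := Ideal.Quotient.field p
  have : Algebra.IsAlgebraic ℚ (B ⧸ p) := Algebra.IsAlgebraic.of_finite ℚ _
  let φ : (B ⧸ p) →ₐ[ℚ] ℂ := IsAlgClosed.lift
  apply hxp
  rw [← Ideal.Quotient.eq_zero_iff_mem, ← map_eq_zero_iff φ φ.injective]
  exact hx (φ.toRingHom.comp (Ideal.Quotient.mk p))

section TensorRat

attribute [local instance] Algebra.TensorProduct.rightAlgebra

theorem TensorProduct.eq_of_forall_ringHom_complex {A : Type*} [CommRing A] [IsReduced A]
    [Module.Finite ℤ A] {x y : A ⊗[ℤ] ℚ} (h : ∀ ψ : A ⊗[ℤ] ℚ →+* ℂ, ψ x = ψ y) : x = y := by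
  have : Module.Finite ℚ (A ⊗[ℤ] ℚ) :=
    Module.Finite.equiv (Algebra.IsPushout.equiv ℤ ℚ A (A ⊗[ℤ] ℚ)).toLinearEquiv
  have : IsReduced (A ⊗[ℤ] ℚ) := isReduced_localizationPreserves
    (Algebra.algebraMapSubmonoid A (nonZeroDivisors ℤ)) _ inferInstance
  exact sub_eq_zero.mp (eq_zero_of_forall_ringHom_complex fun ψ => by rw [map_sub, h, sub_self])

end TensorRat

theorem ringHom_apply_eq_conj_of_isLocalization {A B : Type*} [CommRing A] [CommRing B]
    [Algebra A B] (M : Submonoid A) [IsLocalization M B] {σ : A → A} {τ : B ≃+* B}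
    (hτ : ∀ a, τ (algebraMap A B a) = algebraMap A B (σ a))
    (hσ : ∀ (ψ : A →+* ℂ) (a : A), ψ (σ a) = starRingEnd ℂ (ψ a)) (ψ : B →+* ℂ) (x : B) :
    ψ (τ x) = starRingEnd ℂ (ψ x) :=
  RingHom.congr_fun (IsLocalization.ringHom_ext M (j := ψ.comp τ.toRingHom)
    (k := (starRingEnd ℂ).comp ψ)
    (RingHom.ext fun a => by simpa [hτ] using hσ (ψ.comp (algebraMap A B)) a)) x

theorem ringHom_mul_conj_pos {B : Type*} [CommRing B] {τ : B → B}
    (hτ : ∀ (ψ : B →+* ℂ) (x : B), ψ (τ x) = starRingEnd ℂ (ψ x)) (v : Bˣ) (ψ : B →+* ℂ) :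
    (ψ (v * τ v)).im = 0 ∧ 0 < (ψ (v * τ v)).re := by
  rw [map_mul, hτ, Complex.mul_conj]
  exact ⟨Complex.ofReal_im _, by exact_mod_cast Complex.normSq_pos.mpr (v.isUnit.map ψ).ne_zero⟩

section Conjugate

variable {A B : Type*} [CommRing A] [CommRing B] [Algebra A B] {σ : A → A} {τ : B ≃+* B}

theorem span_image_span (hτ : ∀ a, τ (algebraMap A B a) = algebraMap A B (σ a)) (s : Set B) :
    span A (τ '' span A s) = span A (τ '' s) := by
  refine le_antisymm (span_le.mpr ?_) (span_mono (Set.image_mono subset_span))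
  rintro _ ⟨x, hx, rfl⟩
  induction hx using span_induction with
  | mem x hx => exact subset_span ⟨x, hx, rfl⟩
  | zero => simp
  | add x y _ _ hx hy => rw [map_add]; exact add_mem hx hy
  | smul a x _ hx =>
    rw [Algebra.smul_def, map_mul, hτ, ← Algebra.smul_def]
    exact smul_mem _ _ hx

theorem span_image_span_singleton (hτ : ∀ a, τ (algebraMap A B a) = algebraMap A B (σ a))
    (x : B) : span A (τ '' span A {x}) = span A {τ x} := by
  rw [span_image_span hτ, Set.image_singleton]

theorem span_image_mul (hτ : ∀ a, τ (algebraMap A B a) = algebraMap A B (σ a))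
    (I J : Submodule A B) : span A (τ '' ↑(I * J)) = span A (τ '' I) * span A (τ '' J) := by
  rw [mul_eq_span_mul_set, span_image_span hτ, Set.image_mul, span_mul_span]

theorem span_image_span_image (hτ : ∀ a, τ (algebraMap A B a) = algebraMap A B (σ a))
    (hτ₂ : Function.Involutive τ) (I : Submodule A B) :
    span A (τ '' span A (τ '' I)) = I := by
  rw [span_image_span hτ, Set.image_image, funext hτ₂, Set.image_id', span_eq]

theorem exists_unit_of_mul_span_image_eq_span_singleton
    (hτ : ∀ a, τ (algebraMap A B a) = algebraMap A B (σ a)) (hτ₂ : Function.Involutive τ)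
    {I : Submodule A B} {w : B} {v : Bˣ} (hIv : I = span A {(v : B)})
    (hIw : I * span A (τ '' I) = span A {w}) (hw : τ w = w) :
    ∃ u : Bˣ, I * I = span A {(u : B)} ∧ w * w = u * τ u := by
  have hτv : τ v * τ ↑v⁻¹ = 1 := by rw [← map_mul, Units.mul_inv, map_one]
  have hw_span : span A {w} = span A {v * τ v} := by
    rw [← hIw, hIv, span_image_span_singleton hτ, span_mul_span, Set.singleton_mul_singleton]
  have hw_unit : IsUnit w := by
    obtain ⟨a, ha⟩ := mem_span_singleton.mp (hw_span ▸ mem_span_singleton_self (v * τ v))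
    rw [Algebra.smul_def] at ha
    exact isUnit_of_mul_isUnit_right (ha ▸ v.isUnit.mul (v.isUnit.map τ))
  let u : Bˣ := hw_unit.unit * (v * Units.map τ.toMonoidHom v⁻¹)
  have hu : (u : B) = w * (v * τ ↑v⁻¹) := rfl
  refine ⟨u, ?_, ?_⟩
  · have : (v * τ v) * (v * τ ↑v⁻¹) = v * v := by linear_combination (v * v : B) * hτv
    rw [hu, ← Set.singleton_mul_singleton, ← span_mul_span, hw_span, span_mul_span,
      Set.singleton_mul_singleton, this, hIv, span_mul_span, Set.singleton_mul_singleton]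
  · rw [hu, map_mul, map_mul, hw, hτ₂]
    linear_combination (-w * w) * v.mul_inv + (-w * w * v * ↑v⁻¹) * hτv

theorem mul_self_mul_span_image_eq (hτ : ∀ a, τ (algebraMap A B a) = algebraMap A B (σ a))
    (hτ₂ : Function.Involutive τ) {I : Submodule A B} {v : B}
    (hIv : I * span A (τ '' I) = span A {v}) :
    (I * I) * span A (τ '' ↑(I * I)) = span A {v * τ v} := by
  have hτv : span A {τ v} = span A {v} := by
    rw [← span_image_span_singleton hτ, ← hIv, span_image_mul hτ, span_image_span_image hτ hτ₂,
      mul_comm, hIv]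
  rw [span_image_mul hτ, mul_mul_mul_comm, hIv, ← Set.singleton_mul_singleton, ← span_mul_span,
    hτv]

end Conjugate

theorem stmt19_general (A : Type*) [CommRing A] [IsReduced A]
    [Module.Finite ℤ A]
    (σ : A ≃+* A)
    (hσ : ∀ (ψ : A →+* ℂ) (x : A), ψ (σ x) = starRingEnd ℂ (ψ x))
    (σQ : (A ⊗[ℤ] ℚ) ≃+* (A ⊗[ℤ] ℚ))
    (hσQ : ∀ a : A, σQ (algebraMap A (A ⊗[ℤ] ℚ) a) = algebraMap A (A ⊗[ℤ] ℚ) (σ a)) :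
    (∀ (I : Submodule A (A ⊗[ℤ] ℚ)) (w : A ⊗[ℤ] ℚ) (v : (A ⊗[ℤ] ℚ)ˣ),
      I.FG → (∀ x : A ⊗[ℤ] ℚ, ∃ n : ℤ, n ≠ 0 ∧ n • x ∈ I) →
      (∃ J : Submodule A (A ⊗[ℤ] ℚ), I * J = 1) →
      (∀ ψ : (A ⊗[ℤ] ℚ) →+* ℂ, (ψ w).im = 0 ∧ 0 < (ψ w).re) →
      I * Submodule.span A (⇑σQ '' (I : Set (A ⊗[ℤ] ℚ))) = Submodule.span A {w} →
      I = Submodule.span A {(v : A ⊗[ℤ] ℚ)} →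
      ∃ u : (A ⊗[ℤ] ℚ)ˣ,
        I * I = Submodule.span A {(u : A ⊗[ℤ] ℚ)} ∧ w * w = (u : A ⊗[ℤ] ℚ) * σQ u) ∧
    (∀ (I : Submodule A (A ⊗[ℤ] ℚ)) (v : (A ⊗[ℤ] ℚ)ˣ),
      I.FG → (∀ x : A ⊗[ℤ] ℚ, ∃ n : ℤ, n ≠ 0 ∧ n • x ∈ I) →
      (∃ J : Submodule A (A ⊗[ℤ] ℚ), I * J = 1) →
      I * Submodule.span A (⇑σQ '' (I : Set (A ⊗[ℤ] ℚ))) =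
        Submodule.span A {(v : A ⊗[ℤ] ℚ)} →
      ∃ w : A ⊗[ℤ] ℚ,
        (∀ ψ : (A ⊗[ℤ] ℚ) →+* ℂ, (ψ w).im = 0 ∧ 0 < (ψ w).re) ∧
        (I * I) * Submodule.span A
            (⇑σQ '' ((I * I : Submodule A (A ⊗[ℤ] ℚ)) : Set (A ⊗[ℤ] ℚ))) =
          Submodule.span A {w}) := by
  have hconj : ∀ (ψ : A ⊗[ℤ] ℚ →+* ℂ) x, ψ (σQ x) = starRingEnd ℂ (ψ x) :=
    ringHom_apply_eq_conj_of_isLocalization (Algebra.algebraMapSubmonoid A (nonZeroDivisors ℤ))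
      hσQ hσ
  have hinv : Function.Involutive σQ := fun x =>
    TensorProduct.eq_of_forall_ringHom_complex fun ψ => by rw [hconj, hconj, Complex.conj_conj]
  refine ⟨fun I w v _ _ _ hw hIw hIv => ?_, fun I v _ _ _ hIv =>
    ⟨_, ringHom_mul_conj_pos hconj v, mul_self_mul_span_image_eq hσQ hinv hIv⟩⟩
  have hw_fix : σQ w = w := TensorProduct.eq_of_forall_ringHom_complex fun ψ => by
    rw [hconj, Complex.conj_eq_iff_im.mpr (hw ψ).1]
  exact exists_unit_of_mul_span_image_eq_span_singleton hσQ hinv hIv hIw hw_fix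

/-- The natural homomorphism `h : WPic(A) → Cl⁻(A)`, `[(I,w)] ↦ [I]`, has kernel
and cokernel annihilated by 2, stated elementwise.  Here `A_ℚ = A ⊗[ℤ] ℚ`, `σQ`
is the ℚ-linear extension of the involution `σ`, the conjugate ideal `Ī` is
`span A (σQ '' I)`, and `w` totally positive means `ψ w ∈ ℝ_{>0}` for every ring
homomorphism `ψ : A_ℚ → ℂ`.
Kernel: if `(I,w)` is a WPic pair (with `I` an invertible fractional ideal,
`w` totally positive, `I·Ī = Aw`) and `I = Av` is principal (v a unit), then
`(I², w²)` lies in the trivial subgroup `{(Au, u·σQ u)}`.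
Cokernel: if `I` is an invertible fractional ideal with `I·Ī = Av` principal,
then the square `[I]²` is in the image of `h`, i.e. there is a totally positive
`w` with `I²·(I²)̄ = Aw`. -/
theorem stmt19 (A : Type*) [CommRing A] [IsReduced A]
    [Module.Free ℤ A] [Module.Finite ℤ A]
    (σ : A ≃+* A)
    (hσ : ∀ (ψ : A →+* ℂ) (x : A), ψ (σ x) = starRingEnd ℂ (ψ x))
    (σQ : (A ⊗[ℤ] ℚ) ≃+* (A ⊗[ℤ] ℚ))
    (hσQ : ∀ a : A, σQ (algebraMap A (A ⊗[ℤ] ℚ) a) = algebraMap A (A ⊗[ℤ] ℚ) (σ a)) :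
    (∀ (I : Submodule A (A ⊗[ℤ] ℚ)) (w : A ⊗[ℤ] ℚ) (v : (A ⊗[ℤ] ℚ)ˣ),
      I.FG → (∀ x : A ⊗[ℤ] ℚ, ∃ n : ℤ, n ≠ 0 ∧ n • x ∈ I) →
      (∃ J : Submodule A (A ⊗[ℤ] ℚ), I * J = 1) →
      (∀ ψ : (A ⊗[ℤ] ℚ) →+* ℂ, (ψ w).im = 0 ∧ 0 < (ψ w).re) →
      I * Submodule.span A (⇑σQ '' (I : Set (A ⊗[ℤ] ℚ))) = Submodule.span A {w} →
      I = Submodule.span A {(v : A ⊗[ℤ] ℚ)} →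
      ∃ u : (A ⊗[ℤ] ℚ)ˣ,
        I * I = Submodule.span A {(u : A ⊗[ℤ] ℚ)} ∧ w * w = (u : A ⊗[ℤ] ℚ) * σQ u) ∧
    (∀ (I : Submodule A (A ⊗[ℤ] ℚ)) (v : (A ⊗[ℤ] ℚ)ˣ),
      I.FG → (∀ x : A ⊗[ℤ] ℚ, ∃ n : ℤ, n ≠ 0 ∧ n • x ∈ I) →
      (∃ J : Submodule A (A ⊗[ℤ] ℚ), I * J = 1) →
      I * Submodule.span A (⇑σQ '' (I : Set (A ⊗[ℤ] ℚ))) =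
        Submodule.span A {(v : A ⊗[ℤ] ℚ)} →
      ∃ w : A ⊗[ℤ] ℚ,
        (∀ ψ : (A ⊗[ℤ] ℚ) →+* ℂ, (ψ w).im = 0 ∧ 0 < (ψ w).re) ∧
        (I * I) * Submodule.span A
            (⇑σQ '' ((I * I : Submodule A (A ⊗[ℤ] ℚ)) : Set (A ⊗[ℤ] ℚ))) =
          Submodule.span A {w}) :=
  stmt19_general A σ hσ σQ hσQ
end
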